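/- With P' constructed as above from T ⪯ P in type B or C, the diagrams D(P,T) and D(P',T) have the same cuts: C_{P,T} = C_{P',T}. -/

import Mathlib

open scoped Classical

/-- `p : ℕ → ℕ` encodes a Schubert symbol `{p 1 < … < p m} ⊆ [1,N]`
with the conventions `p 0 = 0` and `p (m+1) = N+1`, and the isotropic
condition that no two elements sum to `N+1`. -/
structure IsSSym (N m : ℕ) (p : ℕ → ℕ) : Prop where
  zero : p 0 = 0
  top : p (m+1) = N+1
  mono : ∀ i j, i < j → j ≤ m+1 → p i < p j
  ub : ∀ i, 1 ≤ i → i ≤ m → p i ≤ N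
  iso : ∀ i j, 1 ≤ i → i ≤ m → 1 ≤ j → j ≤ m → p i + p j ≠ N+1

/-- The underlying set `{p 1, …, p m}` of a Schubert symbol. -/
def symSet (m : ℕ) (p : ℕ → ℕ) : Finset ℕ := (Finset.Icc 1 m).image p

/-- Componentwise order `t_i ≤ p_i` on Schubert symbols. -/
def leS (m : ℕ) (t p : ℕ → ℕ) : Prop := ∀ i, 1 ≤ i → i ≤ m → t i ≤ p i

/-- `c` is a visible cut of the Richardson diagram `D(P,T)`:
`p_i ≤ c < t_{i+1}` for some `0 ≤ i ≤ m`. -/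
def visCut (m : ℕ) (p t : ℕ → ℕ) (c : ℕ) : Prop :=
  ∃ i, i ≤ m ∧ p i ≤ c ∧ c < t (i+1)

/-- `c` is an apparent cut of `D(P,T)`: `c` or `N−c` is a visible cut. -/
def appCut (N m : ℕ) (p t : ℕ → ℕ) (c : ℕ) : Prop :=
  visCut m p t c ∨ visCut m p t (N - c)

/-- `c` is a zero column of `D(P,T)`: `p_j < c < t_{j+1}` for some `j`. -/
def zeroCol (m : ℕ) (p t : ℕ → ℕ) (c : ℕ) : Prop :=
  ∃ j, j ≤ m ∧ p j < c ∧ c < t (j+1)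

/-- `(j,c)` is a lone star of `D(P,T)` with respect to the cut predicate `cut`. -/
def loneStar (m : ℕ) (p t : ℕ → ℕ) (cut : ℕ → Prop) (j c : ℕ) : Prop :=
  1 ≤ j ∧ j ≤ m ∧ t j ≤ c ∧ c ≤ p j ∧
    ((c = t j ∧ cut c) ∨ (c = p j ∧ cut (c-1)))

/-- `c ∈ 𝓛_{P,T}` : `c` is a zero column, or column `N+1−c` contains a lone star. -/
def LSet (N m : ℕ) (p t : ℕ → ℕ) (cut : ℕ → Prop) (c : ℕ) : Prop :=
  1 ≤ c ∧ c ≤ N ∧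
    (zeroCol m p t c ∨ ∃ j, loneStar m p t cut j (N+1-c))

/-- `[P] = P ∪ {N+1−p : p ∈ P}`. -/
def brP (N : ℕ) (P : Finset ℕ) : Finset ℕ := P ∪ P.image (fun p => N+1-p)

/-- The type-`D` type function `t(P) ∈ {0,1,2}`: if `n+1 ∈ [P]` it is the parity of
`#([1,n+1] \ P)`; otherwise it is `2`. -/
def tD (n : ℕ) (P : Finset ℕ) : ℕ :=
  if (n+1) ∈ P ∨ (n+2) ∈ P then (Finset.Icc 1 (n+1) \ P).card % 2 else 2

/-- The type-`D` Bruhat order `T ⪯ P` on Schubert symbols for `OG(m, 2n+2)`. -/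
def bruhatD (n m : ℕ) (t p : ℕ → ℕ) : Prop :=
  leS m t p ∧ ∀ c, 1 ≤ c → c ≤ n →
    Finset.Icc (c+1) (n+1) ⊆ brP (2*n+2) (symSet m p) →
    Finset.Icc (c+1) (n+1) ⊆ brP (2*n+2) (symSet m t) →
    ((symSet m p) ∩ Finset.Icc 1 c).card = ((symSet m t) ∩ Finset.Icc 1 c).card →
    tD n (symSet m p) = tD n (symSet m t)

/-- The exceptional center cut `n+1` exists in `D(P,T)`:
`p_i = n+2 ≤ t_{i+1}` or `t_i = n+1 ≥ p_{i−1}` for some `i`. -/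
def centerCut (n m : ℕ) (p t : ℕ → ℕ) : Prop :=
  ∃ i, 1 ≤ i ∧ i ≤ m ∧
    ((p i = n+2 ∧ n+2 ≤ t (i+1)) ∨ (t i = n+1 ∧ p (i-1) ≤ n+1))

/-- `c ∈ [1,n]` is a cut candidate of `D(P,T)`:
`[c+1,n+1] ⊆ [P] ∩ [T]` and `#(T ∩ [1,c]) = #(P ∩ [1,c]) + 1`. -/
def cutCandidate (n m : ℕ) (p t : ℕ → ℕ) (c : ℕ) : Prop :=
  1 ≤ c ∧ c ≤ n ∧
  Finset.Icc (c+1) (n+1) ⊆ brP (2*n+2) (symSet m p) ∧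
  Finset.Icc (c+1) (n+1) ⊆ brP (2*n+2) (symSet m t) ∧
  ((symSet m t) ∩ Finset.Icc 1 c).card = ((symSet m p) ∩ Finset.Icc 1 c).card + 1

/-- Exceptional cuts of `D(P,T)` in type `D`. -/
def excCut (n m : ℕ) (p t : ℕ → ℕ) (c : ℕ) : Prop :=
  (centerCut n m p t ∧ c = n+1) ∨
  (tD n (symSet m t) ≠ tD n (symSet m p) ∧
    ∃ d, cutCandidate n m p t d ∧ (c = d ∨ c = 2*n+2 - d))

/-- The type-`D` cut set: apparent cuts together with exceptional cuts. -/
def cutD (n m : ℕ) (p t : ℕ → ℕ) (c : ℕ) : Prop :=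
  appCut (2*n+2) m p t c ∨ excCut n m p t c

/-- The construction of the Schubert symbol `P'` from `T ⪯ P` in types `B` and `C`. -/
noncomputable def Pp (N m : ℕ) (p t : ℕ → ℕ) (i : ℕ) : ℕ :=
  if p i < t (i+1) then p i
  else if ¬ appCut N m p t (t (i+1) - 1) then t (i+1)
  else ((Finset.Icc (t i) (t (i+1) - 1)).filter
        (fun c => ¬ LSet N m p t (appCut N m p t) c)).sup id

/-- The modified construction of the Schubert symbol `P̃` from `T ⪯ P` in type `D`. -/
noncomputable def Ptil (n m : ℕ) (p t : ℕ → ℕ) (i : ℕ) : ℕ :=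
  if p i < t (i+1) then p i
  else if ¬ cutD n m p t (t (i+1) - 1) then
    (if t (i+1) = n+1 ∨ t (i+1) = n+2 then 2*n+3 - t (i+1) else t (i+1))
  else ((Finset.Icc (t i) (t (i+1) - 1)).filter
        (fun c => ¬ LSet (2*n+2) m p t (cutD n m p t) c)).sup id

/-- A critical window `[c+1, N−c]` in `D(P,T)` (type `D`, defined when `t(T) ≠ t(P)`):
`c` and `N−c` are visible cuts and `[c+1,n+1] ⊆ [T] ∩ [P]`. -/
def critWindow (n m : ℕ) (p t : ℕ → ℕ) (c : ℕ) : Prop :=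
  c ≤ n ∧ tD n (symSet m t) ≠ tD n (symSet m p) ∧
  visCut m p t c ∧ visCut m p t (2*n+2 - c) ∧
  Finset.Icc (c+1) (n+1) ⊆ brP (2*n+2) (symSet m t) ∧
  Finset.Icc (c+1) (n+1) ⊆ brP (2*n+2) (symSet m p)

/-- The quadratic form `f_c = x_1 x_N + … + x_c x_{N+1−c}`. -/
noncomputable def fquad (N : ℕ) (c : ℕ) (x : ℕ → ℂ) : ℂ := ∑ i ∈ Finset.Icc 1 c, x i * x (N+1-i)

/-- The variety `Z_{P,T}` (affine cone) cut out by quadratic equations `f_c = 0`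
for `c` in a prescribed set `Q` and linear equations `x_c = 0` for `c ∈ 𝓛_{P,T}`. -/
def Zvar (N m : ℕ) (p t : ℕ → ℕ) (Q : ℕ → Prop) (cut : ℕ → Prop) : Set (ℕ → ℂ) :=
  {x | (∀ c, Q c → fquad N c x = 0) ∧ ∀ c, LSet N m p t cut c → x c = 0}


/-!
Lowering `p` only enlarges the set of visible cuts, and `P' ≤ P`, so every cut of `D(P,T)` is a
cut of `D(P',T)`. Conversely, a visible cut `p'_i ≤ c < t_{i+1}` of `D(P',T)` is already a cut of
`D(P,T)`: either `p'_i = p_i`, or `p'_i` is the largest `c ∈ [t_i, t_{i+1} - 1]` outside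
`𝓛_{P,T}`, and then every column of `(p'_i, t_{i+1} - 1]` lies in `𝓛_{P,T}`, hence sits just to
the right of a cut, while `t_{i+1} - 1` is a cut by construction. Finally the cut set is
symmetric under `c ↦ N - c`.
-/

lemma of_sup_Icc_filter_not_le {C L : ℕ → Prop} {a b c : ℕ}
    (hstep : ∀ x, L x → C (x - 1)) (hb : C b) (ha : a ≤ b) (haL : ¬ L a)
    (hc : ((Finset.Icc a b).filter fun x => ¬ L x).sup id ≤ c) (hcb : c ≤ b) : C c := by
  have hsup_ge : a ≤ ((Finset.Icc a b).filter fun x => ¬ L x).sup id :=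
    Finset.le_sup (f := id) (Finset.mem_filter.2 ⟨Finset.mem_Icc.2 ⟨le_rfl, ha⟩, haL⟩)
  obtain rfl | hcb := eq_or_lt_of_le hcb
  · exact hb
  have hL : L (c + 1) := by
    by_contra hL
    have hmem : c + 1 ∈ (Finset.Icc a b).filter fun x => ¬ L x :=
      Finset.mem_filter.2 ⟨Finset.mem_Icc.2 ⟨by omega, hcb⟩, hL⟩
    have := Finset.le_sup (f := id) hmem
    simp only [id] at this
    omega
  simpa using hstep _ hL

section Cuts

variable {N m : ℕ} {p q t : ℕ → ℕ}

lemma IsSSym.apply_le_apply (hp : IsSSym N m p) {i j : ℕ} (hij : i ≤ j) (hj : j ≤ m + 1) :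
    p i ≤ p j := by
  obtain rfl | hij := eq_or_lt_of_le hij
  · exact le_rfl
  · exact (hp.mono i j hij hj).le

lemma IsSSym.lt_of_apply_lt (hp : IsSSym N m p) {i j : ℕ} (h : p i < p j) (hi : i ≤ m + 1) :
    i < j := by
  by_contra! hji
  exact (hp.apply_le_apply hji hi).not_gt h

lemma visCut_zero (hp : IsSSym N m p) (ht : IsSSym N m t) : visCut m p t 0 := by
  have := ht.mono 0 1 one_pos (by omega)
  exact ⟨0, Nat.zero_le m, hp.zero.le, by rw [ht.zero] at this; exact this⟩

lemma visCut_anti (hqp : ∀ i, q i ≤ p i) {c : ℕ} (h : visCut m p t c) : visCut m q t c :=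
  let ⟨i, him, hpc, hct⟩ := h
  ⟨i, him, (hqp i).trans hpc, hct⟩

lemma appCut_anti (hqp : ∀ i, q i ≤ p i) {c : ℕ} (h : appCut N m p t c) : appCut N m q t c :=
  h.imp (visCut_anti hqp) (visCut_anti hqp)

lemma appCut_sub_iff {c : ℕ} (hc : c ≤ N) : appCut N m p t (N - c) ↔ appCut N m p t c := by
  rw [appCut, appCut, Nat.sub_sub_self hc, or_comm]

lemma appCut_of_appCut_sub (hp : IsSSym N m p) (ht : IsSSym N m t) {c : ℕ}
    (h : appCut N m p t (N - c)) : appCut N m p t c := by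
  rcases le_or_gt c N with hc | hc
  · exact (appCut_sub_iff hc).1 h
  · exact Or.inr (Nat.sub_eq_zero_of_le hc.le ▸ visCut_zero hp ht)

/-- By isotropy `N + 1 - p_j ∉ P`, so the cut can move one step left. -/
lemma visCut_sub_of_visCut_succ_sub (hp : IsSSym N m p) {j : ℕ} (hj1 : 1 ≤ j) (hjm : j ≤ m)
    (h : visCut m p t (N + 1 - p j)) : visCut m p t (N - p j) := by
  obtain ⟨k, hkm, hpk, hkt⟩ := h
  have hpjN := hp.ub j hj1 hjm
  refine ⟨k, hkm, ?_, by omega⟩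
  rcases Nat.eq_zero_or_pos k with rfl | hk1
  · rw [hp.zero]; omega
  · have := hp.iso k j hk1 hkm hj1 hjm
    omega

lemma not_visCut_apply (hp : IsSSym N m p) (ht : IsSSym N m t) {i : ℕ} (him : i ≤ m)
    (hi : t i < p i) : ¬ visCut m p t (t i) := by
  rintro ⟨k, hkm, hpk, hkt⟩
  have hik : i < k + 1 := ht.lt_of_apply_lt hkt (by omega)
  have := hp.apply_le_apply (show i ≤ k by omega) (by omega)
  omega

lemma loneStar_appCut_cases (hp : IsSSym N m p) (ht : IsSSym N m t) {j d : ℕ}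
    (h : loneStar m p t (appCut N m p t) j d) :
    (d = t j ∧ appCut N m p t d) ∨ (d = p j ∧ visCut m p t (N + 1 - d)) := by
  obtain ⟨hj1, hjm, htd, hdp, ⟨rfl, hcut⟩ | ⟨rfl, ⟨k, hkm, hpk, hkt⟩ | hv⟩⟩ := h
  · exact Or.inl ⟨rfl, hcut⟩
  · have hpj := hp.zero ▸ hp.mono 0 j (by omega) (by omega)
    have hkj : k < j := hp.lt_of_apply_lt (by omega) (by omega)
    have := ht.apply_le_apply (show k + 1 ≤ j by omega) (by omega)
    have := ht.mono j (j + 1) (by omega) (by omega)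
    exact Or.inl ⟨by omega, Or.inl ⟨j, hjm, le_rfl, by omega⟩⟩
  · have hpj := hp.zero ▸ hp.mono 0 j (by omega) (by omega)
    exact Or.inr ⟨rfl, by rwa [show N - (p j - 1) = N + 1 - p j by omega] at hv⟩

lemma appCut_sub_one_of_LSet (hp : IsSSym N m p) (ht : IsSSym N m t) {c : ℕ}
    (h : LSet N m p t (appCut N m p t) c) : appCut N m p t (c - 1) := by
  obtain ⟨hc1, hcN, ⟨j, hjm, hpj, hjt⟩ | ⟨j, hstar⟩⟩ := h
  · exact Or.inl ⟨j, hjm, by omega, by omega⟩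
  have hc : c - 1 = N - (N + 1 - c) := by omega
  rcases loneStar_appCut_cases hp ht hstar with ⟨-, hcut⟩ | ⟨hd, hv⟩
  · rwa [hc, appCut_sub_iff (by omega)]
  · obtain ⟨hj1, hjm, -⟩ := hstar
    rw [hd] at hv
    exact Or.inl (hc ▸ hd ▸ visCut_sub_of_visCut_succ_sub hp hj1 hjm hv)

lemma not_LSet_apply (hp : IsSSym N m p) (ht : IsSSym N m t) {i : ℕ} (hi1 : 1 ≤ i)
    (him : i ≤ m) (hi : t i < p i) : ¬ LSet N m p t (appCut N m p t) (t i) := by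
  rintro ⟨-, hiN, ⟨j, hjm, hpj, hjt⟩ | ⟨j, hstar⟩⟩
  · have hij : i < j + 1 := ht.lt_of_apply_lt hjt (by omega)
    have := hp.apply_le_apply (show i ≤ j by omega) (by omega)
    omega
  rcases loneStar_appCut_cases hp ht hstar with ⟨htj, -⟩ | ⟨-, hv⟩
  · obtain ⟨hj1, hjm, -⟩ := hstar
    exact ht.iso i j hi1 him hj1 hjm (by omega)
  · rw [show N + 1 - (N + 1 - t i) = t i by omega] at hv
    exact not_visCut_apply hp ht him hi hv

lemma Pp_le (i : ℕ) : Pp N m p t i ≤ p i := by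
  unfold Pp
  split_ifs with hlt
  · exact le_rfl
  · refine Finset.sup_le fun x hx => ?_
    have := (Finset.mem_Icc.1 (Finset.mem_filter.1 hx).1).2
    simp only [id]
    omega
  · omega

lemma appCut_of_visCut_Pp (hp : IsSSym N m p) (ht : IsSSym N m t) {c : ℕ}
    (h : visCut m (Pp N m p t) t c) : appCut N m p t c := by
  obtain ⟨i, him, hPc, hct⟩ := h
  unfold Pp at hPc
  split_ifs at hPc with hlt hcut
  · exact Or.inl ⟨i, him, hPc, hct⟩
  · have hi1 : 1 ≤ i := by
      rcases Nat.eq_zero_or_pos i with rfl | hi1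
      · have := ht.mono 0 1 one_pos (by omega)
        simp only [hp.zero, ht.zero, zero_add] at hlt this
        omega
      · exact hi1
    have htt := ht.mono i (i + 1) (by omega) (by omega)
    exact of_sup_Icc_filter_not_le (fun _ hx => appCut_sub_one_of_LSet hp ht hx) hcut
      (by omega) (not_LSet_apply hp ht hi1 him (by omega)) hPc (by omega)
  · omega

end Cuts

theorem stmt_11_general (N m : ℕ) (p t : ℕ → ℕ)
    (hp : IsSSym N m p) (ht : IsSSym N m t) :
    ∀ c, appCut N m p t c ↔ appCut N m (Pp N m p t) t c := by
  intro c
  refine ⟨appCut_anti Pp_le, ?_⟩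
  rintro (h | h)
  · exact appCut_of_visCut_Pp hp ht h
  · exact appCut_of_appCut_sub hp ht (appCut_of_visCut_Pp hp ht h)

/-- (types B/C) The diagrams `D(P,T)` and `D(P',T)` have the same cuts:
`𝓒_{P,T} = 𝓒_{P',T}`. -/
theorem stmt_11 (N m : ℕ) (p t : ℕ → ℕ)
    (hp : IsSSym N m p) (ht : IsSSym N m t) (hle : leS m t p) :
    ∀ c, appCut N m p t c ↔ appCut N m (Pp N m p t) t c :=
  stmt_11_general N m p t hp ht
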